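/- (Shuffle identity for the non-strict signature) Let S be an additively idempotent commutative semiring, z a d-dimensional time series over S, v and w words over the alphabet A, and 0 ≤ s ≤ t integers. Then ⟨ISS^{idem}_{s,t}(z), v⟩ ⊙ ⟨ISS^{idem}_{s,t}(z), w⟩ = ⊕_{r} ⟨ISS^{idem}_{s,t}(z), r⟩, where the sum on the right runs over all shuffles r of v and w, i.e. all words obtained by interleaving v and w while preserving the relative order of letters within each word. -/
import Mathlib


/-- The monomial `z^{⊙a}` associated to an exponent vector `a ∈ ℕ^d` and `z ∈ S^d`. -/
def monom {S : Type*} [CommSemiring S] {d : ℕ} (z : Fin d → S) (a : Fin d → ℕ) : S :=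
  ∏ i, z i ^ a i

/-- The **non-strict** iterated-sums signature coefficient
`⟨ISS^idem_{s,t}(z), w⟩ = ⊕_{s < j_1 ≤ j_2 ≤ ⋯ ≤ j_k ≤ t} z_{j_1}^{⊙w_1} ⊙ ⋯ ⊙ z_{j_k}^{⊙w_k}`. -/
def ISSI {S : Type*} [CommSemiring S] {d : ℕ} (z : ℕ → Fin d → S) :
    ℕ → ℕ → List (Fin d → ℕ) → S
  | _, _, [] => 1
  | s, t, a :: w => ∑ j ∈ Finset.Ioc s t, monom (z j) a * ISSI z (j - 1) t w

/-- The multiset of all shuffles of two words: all words obtained by interleaving the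
two words while preserving the relative order of letters within each word. -/
def shuffles {α : Type*} : List α → List α → Multiset (List α)
  | [], v => {v}
  | u, [] => {u}
  | a :: u, b :: v =>
      (shuffles u (b :: v)).map (a :: ·) + (shuffles (a :: u) v).map (b :: ·)
termination_by u v => u.length + v.length

/-- Exchange a finset sum with a multiset sum of a map. -/
lemma multiset_sum_swap {α S : Type*} [AddCommMonoid S] (I : Finset ℕ)
    (m : Multiset α) (g : ℕ → α → S) :
    ∑ j ∈ I, (m.map (g j)).sum = (m.map (fun r => ∑ j ∈ I, g j r)).sum := by
  induction m using Multiset.induction_on with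
  | empty => simp
  | cons a m ih => simp [Finset.sum_add_distrib, ih]

/-- With additive idempotence, adding again a term already present in a sum is absorbed. -/
lemma add_self_mem {S : Type*} [AddCommMonoid S] (hidem : ∀ a : S, a + a = a)
    {I : Finset ℕ} {x : ℕ} (hx : x ∈ I) (g : ℕ → S) :
    (∑ k ∈ I, g k) + g x = ∑ k ∈ I, g k := by
  rw [← Finset.add_sum_erase _ _ hx, add_right_comm, hidem]

lemma issi_nil {S : Type*} [CommSemiring S] {d : ℕ} (z : ℕ → Fin d → S) (s t : ℕ) :
    ISSI z s t [] = 1 := by simp [ISSI]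

lemma issi_cons {S : Type*} [CommSemiring S] {d : ℕ} (z : ℕ → Fin d → S) (s t : ℕ)
    (a : Fin d → ℕ) (w : List (Fin d → ℕ)) :
    ISSI z s t (a :: w) = ∑ j ∈ Finset.Ioc s t, monom (z j) a * ISSI z (j - 1) t w := by
  simp [ISSI]

lemma issi_aux {S : Type*} [CommSemiring S] {d : ℕ}
    (hidem : ∀ a : S, a + a = a) (z : ℕ → Fin d → S) (t : ℕ) :
    ∀ n (v w : List (Fin d → ℕ)) (s : ℕ), v.length + w.length ≤ n → s ≤ t →
    ISSI z s t v * ISSI z s t w = ((shuffles v w).map (ISSI z s t)).sum := by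
  intro n
  induction n with
  | zero =>
    intro v w s hlen hst
    obtain rfl : v = [] := by cases v <;> simp_all
    obtain rfl : w = [] := by cases w <;> simp_all
    simp [shuffles, issi_nil]
  | succ n ih =>
    intro v w s hlen hst
    match v, w with
    | [], w => simp [shuffles, issi_nil]
    | (a :: u), [] => simp [shuffles, issi_nil]
    | (a :: u), (b :: x) =>
      set I := Finset.Ioc s t with hI
      set f : ℕ → ℕ → S := fun j k =>
        (monom (z j) a * ISSI z (j-1) t u) * (monom (z k) b * ISSI z (k-1) t x) with hf
      have expand : ISSI z s t (a::u) * ISSI z s t (b::x)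
          = ∑ j ∈ I, ∑ k ∈ I, f j k := by
        rw [issi_cons, issi_cons, Finset.sum_mul_sum]
      -- triangle swap
      have tri : ∑ k ∈ I, ∑ j ∈ Finset.Ioc (k-1) t, f j k
          = ∑ j ∈ I, ∑ k ∈ Finset.Ioc s j, f j k := by
        apply Finset.sum_comm'
        intro k j
        simp only [hI, Finset.mem_Ioc]
        omega
      -- split the square into two triangles, using idempotence on the diagonal
      have split : ∑ j ∈ I, ∑ k ∈ I, f j k
          = (∑ j ∈ I, ∑ k ∈ Finset.Ioc (j-1) t, f j k)
            + ∑ k ∈ I, ∑ j ∈ Finset.Ioc (k-1) t, f j k := by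
        rw [tri, ← Finset.sum_add_distrib]
        apply Finset.sum_congr rfl
        intro j hj
        rw [hI, Finset.mem_Ioc] at hj
        have h1 : ∑ k ∈ Finset.Ioc s j, f j k
            = ∑ k ∈ Finset.Ioc s (j-1), f j k + f j j := by
          rw [← Finset.sum_Ioc_consecutive (fun k => f j k) (show s ≤ j-1 by omega)
            (show j-1 ≤ j by omega)]
          congr 1
          rw [show Finset.Ioc (j-1) j = {j} by
            rw [show j = (j-1)+1 by omega]; simp]
          simp
        have h2 : ∑ k ∈ I, f j k
            = ∑ k ∈ Finset.Ioc s (j-1), f j k + ∑ k ∈ Finset.Ioc (j-1) t, f j k := by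
          rw [Finset.sum_Ioc_consecutive (fun k => f j k) (show s ≤ j-1 by omega)
            (show j-1 ≤ t by omega)]
        rw [h1, h2]
        have hjI : j ∈ I := by rw [hI, Finset.mem_Ioc]; omega
        calc ∑ k ∈ Finset.Ioc s (j-1), f j k + ∑ k ∈ Finset.Ioc (j-1) t, f j k
            = ∑ k ∈ I, f j k := h2.symm
          _ = ∑ k ∈ I, f j k + f j j := (add_self_mem hidem hjI _).symm
          _ = (∑ k ∈ Finset.Ioc s (j-1), f j k + ∑ k ∈ Finset.Ioc (j-1) t, f j k) + f j j := by
              rw [h2]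
          _ = ∑ k ∈ Finset.Ioc (j-1) t, f j k
              + (∑ k ∈ Finset.Ioc s (j-1), f j k + f j j) := by ring
      -- first triangle
      have tri1 : ∑ j ∈ I, ∑ k ∈ Finset.Ioc (j-1) t, f j k
          = (((shuffles u (b::x)).map (a :: ·)).map (ISSI z s t)).sum := by
        have step : ∀ j ∈ I, ∑ k ∈ Finset.Ioc (j-1) t, f j k
            = ((shuffles u (b::x)).map (fun r => monom (z j) a * ISSI z (j-1) t r)).sum := by
          intro j hj
          rw [hI, Finset.mem_Ioc] at hj
          have : ∑ k ∈ Finset.Ioc (j-1) t, f j k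
              = monom (z j) a * (ISSI z (j-1) t u * ISSI z (j-1) t (b::x)) := by
            rw [issi_cons, ← Finset.mul_sum]; ring
          rw [this, ih u (b::x) (j-1) (by simp at hlen ⊢; omega) (by omega)]
          rw [← Multiset.sum_map_mul_left]
        rw [Finset.sum_congr rfl step, multiset_sum_swap, Multiset.map_map]
        congr 1
      -- second triangle
      have tri2 : ∑ k ∈ I, ∑ j ∈ Finset.Ioc (k-1) t, f j k
          = (((shuffles (a::u) x).map (b :: ·)).map (ISSI z s t)).sum := by
        have step : ∀ k ∈ I, ∑ j ∈ Finset.Ioc (k-1) t, f j k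
            = ((shuffles (a::u) x).map (fun r => monom (z k) b * ISSI z (k-1) t r)).sum := by
          intro k hk
          rw [hI, Finset.mem_Ioc] at hk
          have : ∑ j ∈ Finset.Ioc (k-1) t, f j k
              = monom (z k) b * (ISSI z (k-1) t (a::u) * ISSI z (k-1) t x) := by
            rw [issi_cons, Finset.sum_mul, Finset.mul_sum]
            exact Finset.sum_congr rfl fun j _ => by ring
          rw [this, ih (a::u) x (k-1) (by simp at hlen ⊢; omega) (by omega)]
          rw [← Multiset.sum_map_mul_left]
        rw [Finset.sum_congr rfl step, multiset_sum_swap, Multiset.map_map]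
        congr 1
      rw [expand, split, tri1, tri2]
      rw [show shuffles (a::u) (b::x)
          = (shuffles u (b :: x)).map (a :: ·) + (shuffles (a :: u) x).map (b :: ·) from by
        rw [shuffles]]
      rw [Multiset.map_add, Multiset.sum_add]

/-- **Shuffle identity for the non-strict signature.** Let `S` be an additively
idempotent commutative semiring, `z` a `d`-dimensional time series over `S`, `v, w`
words over the alphabet of nonzero exponent vectors, and `0 ≤ s ≤ t`. Then
`⟨ISS^idem_{s,t}(z), v⟩ ⊙ ⟨ISS^idem_{s,t}(z), w⟩ = ⊕_r ⟨ISS^idem_{s,t}(z), r⟩`,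
the sum running over all shuffles `r` of `v` and `w`. -/
theorem issi_shuffle_identity {S : Type*} [CommSemiring S] {d : ℕ}
    (hidem : ∀ a : S, a + a = a)
    (z : ℕ → Fin d → S) (v w : List (Fin d → ℕ))
    (hv : ∀ a ∈ v, a ≠ 0) (hw : ∀ a ∈ w, a ≠ 0)
    (s t : ℕ) (hst : s ≤ t) :
    ISSI z s t v * ISSI z s t w = ((shuffles v w).map (ISSI z s t)).sum :=
  issi_aux hidem z t (v.length + w.length) v w s le_rfl hst
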